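/- arXiv:1601.00750 — 2 statements merged into one kernel-verified Lean document; each statement's English description precedes it below -/
import Mathlib

section
/- Let n, k ≥ 1 and let Gⁱ : ℝⁿ × (ℝⁿ)ᵏ → ℝ be smooth and (k+1)-homogeneous, i.e. Gⁱ(x, λ y⁽¹⁾, …, λᵏ y⁽ᵏ⁾) = λᵏ⁺¹ Gⁱ(x, y⁽¹⁾, …, y⁽ᵏ⁾) for all λ > 0. Define the operator S f = Σⱼ ( y⁽¹⁾ʲ ∂f/∂xʲ + 2y⁽²⁾ʲ ∂f/∂y⁽¹⁾ʲ + ⋯ + k y⁽ᵏ⁾ʲ ∂f/∂y⁽ᵏ⁻¹⁾ʲ − (k+1) Gʲ ∂f/∂y⁽ᵏ⁾ʲ ) and define recursively M₍₁₎ⁱⱼ = ∂Gⁱ/∂y⁽ᵏ⁾ʲ and M₍ᵅ₊₁₎ⁱⱼ = (1/(α+1)) ( S M₍ᵅ₎ⁱⱼ + Σₘ M₍₁₎ⁱₘ M₍ᵅ₎ᵐⱼ ) for α = 1, …, k−1. Then for each α ∈ {1, …, k}, M₍ᵅ₎ⁱⱼ is homogeneous of degree α: M₍ᵅ₎ⁱⱼ(x,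 λ y⁽¹⁾, …, λᵏ y⁽ᵏ⁾) = λᵅ M₍ᵅ₎ⁱⱼ(x, y⁽¹⁾, …, y⁽ᵏ⁾) for all λ > 0. -/
/- STATEMENT 6: If the k-semispray coefficients Gⁱ are smooth and
(k+1)-homogeneous, then the Miron dual coefficients, defined recursively by
M₍₁₎ⁱⱼ = ∂Gⁱ/∂y⁽ᵏ⁾ʲ and M₍ᵅ₊₁₎ⁱⱼ = (1/(α+1))(S M₍ᵅ₎ⁱⱼ + Σₘ M₍₁₎ⁱₘ M₍ᵅ₎ᵐⱼ),
where S is the k-semispray operator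
S f = Σⱼ (y⁽¹⁾ʲ ∂f/∂xʲ + 2y⁽²⁾ʲ ∂f/∂y⁽¹⁾ʲ + ⋯ + k y⁽ᵏ⁾ʲ ∂f/∂y⁽ᵏ⁻¹⁾ʲ − (k+1)Gʲ ∂f/∂y⁽ᵏ⁾ʲ),
are homogeneous of degree α (α = 1, …, k).  In the code, `MironM … a` with
a = 0, …, k−1 stands for M₍ₐ₊₁₎; vertical slot `b : Fin k` stands for y⁽ᵇ⁺¹⁾. -/

noncomputable section

abbrev Pt (n k : ℕ) : Type := (Fin n → ℝ) × (Fin k → Fin n → ℝ)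

def scale (n k : ℕ) (lam : ℝ) (p : Pt n k) : Pt n k :=
  (p.1, fun a => lam ^ ((a : ℕ) + 1) • p.2 a)

/-- The partial derivative ∂f/∂xⁱ at p. -/
def pderivX (n k : ℕ) (f : Pt n k → ℝ) (i : Fin n) (p : Pt n k) : ℝ :=
  fderiv ℝ f p (Pi.single i 1, 0)

/-- The partial derivative ∂f/∂y⁽ᵃ⁺¹⁾ʰ at p. -/
def pderivY (n k : ℕ) (f : Pt n k → ℝ) (a : Fin k) (h : Fin n) (p : Pt n k) : ℝ :=
  fderiv ℝ f p (0, Pi.single a (Pi.single h 1))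

/-- The k-semispray with coefficients G, acting on functions:
S f = Σⱼ (y⁽¹⁾ʲ ∂f/∂xʲ + Σ_{α=1}^{k−1} (α+1) y⁽ᵅ⁺¹⁾ʲ ∂f/∂y⁽ᵅ⁾ʲ − (k+1) Gʲ ∂f/∂y⁽ᵏ⁾ʲ). -/
def Sop (n k : ℕ) (hk : 0 < k) (G : Fin n → Pt n k → ℝ) (f : Pt n k → ℝ)
    (p : Pt n k) : ℝ :=
  (∑ j, p.2 ⟨0, hk⟩ j * pderivX n k f j p) +
  ∑ a : Fin k, ∑ j,
    (if ha : (a : ℕ) + 1 < k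
      then (((a : ℕ) + 2 : ℕ) : ℝ) * p.2 ⟨(a : ℕ) + 1, ha⟩ j
      else -(((k : ℕ) + 1 : ℕ) : ℝ) * G j p) * pderivY n k f a j p

/-- The Miron dual coefficients: `MironM n k hk G a` is M₍ₐ₊₁₎,
M₍₁₎ⁱⱼ = ∂Gⁱ/∂y⁽ᵏ⁾ʲ, M₍ᵅ₊₁₎ⁱⱼ = (1/(α+1))(S M₍ᵅ₎ⁱⱼ + Σₘ M₍₁₎ⁱₘ M₍ᵅ₎ᵐⱼ). -/
def MironM (n k : ℕ) (hk : 0 < k) (G : Fin n → Pt n k → ℝ) :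
    ℕ → Fin n → Fin n → Pt n k → ℝ
  | 0 => fun i j p => pderivY n k (G i) ⟨k - 1, by omega⟩ j p
  | (a + 1) => fun i j p =>
      (((a : ℝ) + 2)⁻¹) *
        (Sop n k hk G (MironM n k hk G a i j) p +
          ∑ m, MironM n k hk G 0 i m p * MironM n k hk G a m j p)

section Aux

variable {n k : ℕ}

/-- `scale n k lam` as a linear map. -/
def scaleLin (n k : ℕ) (lam : ℝ) : Pt n k →ₗ[ℝ] Pt n k where
  toFun := scale n k lam
  map_add' p q := by
    refine Prod.ext rfl ?_
    funext a
    simp [scale, smul_add]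
  map_smul' c p := by
    refine Prod.ext rfl ?_
    funext a
    simp [scale, smul_comm c]

/-- `scale n k lam` as a continuous linear map. -/
def scaleCLM (n k : ℕ) (lam : ℝ) : Pt n k →L[ℝ] Pt n k :=
  LinearMap.toContinuousLinearMap (scaleLin n k lam)

lemma scaleCLM_apply (lam : ℝ) (p : Pt n k) : scaleCLM n k lam p = scale n k lam p := rfl

/-- Homogeneity of degree `r : ℤ`. -/
def Homog (n k : ℕ) (r : ℤ) (f : Pt n k → ℝ) : Prop :=
  ∀ lam : ℝ, 0 < lam → ∀ p : Pt n k, f (scale n k lam p) = lam ^ r * f p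

lemma fderiv_scale {f : Pt n k → ℝ} (hf : Differentiable ℝ f) {r : ℤ}
    (hfh : Homog n k r f) {lam : ℝ} (hl : 0 < lam) (p : Pt n k) (v : Pt n k) :
    fderiv ℝ f (scale n k lam p) (scaleCLM n k lam v) = lam ^ r * fderiv ℝ f p v := by
  have hcomp : (fun q => f (scaleCLM n k lam q)) = fun q => lam ^ r * f q :=
    funext fun q => hfh lam hl q
  have h1 : fderiv ℝ (fun q => f (scaleCLM n k lam q)) p
      = (fderiv ℝ f (scale n k lam p)).comp (scaleCLM n k lam) := by
    rw [show (fun q => f (scaleCLM n k lam q)) = f ∘ (scaleCLM n k lam) from rfl,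
      fderiv_comp p (hf _) (scaleCLM n k lam).differentiableAt,
      (scaleCLM n k lam).fderiv]
    rfl
  have h2 : fderiv ℝ (fun q => lam ^ r * f q) p = lam ^ r • fderiv ℝ f p :=
    fderiv_const_mul (hf p) _
  have h3 : (fderiv ℝ f (scale n k lam p)).comp (scaleCLM n k lam)
      = lam ^ r • fderiv ℝ f p := by rw [← h1, hcomp, h2]
  have := congrArg (fun (L : Pt n k →L[ℝ] ℝ) => L v) h3
  simpa using this

lemma homog_pderivX {f : Pt n k → ℝ} (hf : Differentiable ℝ f) {r : ℤ}
    (hfh : Homog n k r f) (i : Fin n) : Homog n k r (pderivX n k f i) := by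
  intro lam hl p
  have h := fderiv_scale hf hfh hl p (Pi.single i 1, 0)
  have hv : scaleCLM n k lam ((Pi.single i 1 : Fin n → ℝ), (0 : Fin k → Fin n → ℝ))
      = (Pi.single i 1, 0) := by
    rw [scaleCLM_apply]
    refine Prod.ext rfl ?_
    funext a
    simp [scale]
  rw [hv] at h
  exact h

lemma homog_pderivY {f : Pt n k → ℝ} (hf : Differentiable ℝ f) {r : ℤ}
    (hfh : Homog n k r f) (a : Fin k) (h : Fin n) {t : ℤ}
    (ht : t = r - ((a : ℕ) + 1)) : Homog n k t (pderivY n k f a h) := by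
  intro lam hl p
  have key := fderiv_scale hf hfh hl p ((0 : Fin n → ℝ), Pi.single a (Pi.single h 1))
  have hv : scaleCLM n k lam ((0 : Fin n → ℝ), Pi.single a (Pi.single h 1))
      = lam ^ ((a : ℕ) + 1) • (((0 : Fin n → ℝ), Pi.single a (Pi.single h 1)) : Pt n k) := by
    rw [scaleCLM_apply]
    refine Prod.ext ?_ ?_
    · simp [scale]
    · funext b
      rcases eq_or_ne b a with rfl | hba
      · simp [scale]
      · simp [scale, Pi.single_eq_of_ne hba]
  rw [hv, map_smul] at key
  have hne : (lam : ℝ) ^ ((a : ℕ) + 1) ≠ 0 := pow_ne_zero _ hl.ne'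
  have keq : lam ^ ((a : ℕ) + 1) * fderiv ℝ f (scale n k lam p)
        ((0 : Fin n → ℝ), Pi.single a (Pi.single h 1)) = lam ^ r * fderiv ℝ f p
        ((0 : Fin n → ℝ), Pi.single a (Pi.single h 1)) := by
    simpa [smul_eq_mul] using key
  have hX : fderiv ℝ f (scale n k lam p) ((0 : Fin n → ℝ), Pi.single a (Pi.single h 1))
      = (lam ^ ((a : ℕ) + 1))⁻¹ * (lam ^ r * fderiv ℝ f p
        ((0 : Fin n → ℝ), Pi.single a (Pi.single h 1))) := by
    rw [← keq, ← mul_assoc, inv_mul_cancel₀ hne, one_mul]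
  show fderiv ℝ f (scale n k lam p) _ = _
  rw [hX, ht, zpow_sub₀ hl.ne']
  rw [show (((a : ℕ) : ℤ) + 1) = (((a : ℕ) + 1 : ℕ) : ℤ) by push_cast; ring, zpow_natCast]
  unfold pderivY
  ring

lemma homog_add {f g : Pt n k → ℝ} {r : ℤ} (hf : Homog n k r f) (hg : Homog n k r g) :
    Homog n k r (fun p => f p + g p) := by
  intro lam hl p
  simp only [hf lam hl p, hg lam hl p]
  ring

lemma homog_sum {ι : Type*} (s : Finset ι) (F : ι → Pt n k → ℝ) {r : ℤ}
    (h : ∀ i ∈ s, Homog n k r (F i)) :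
    Homog n k r (fun p => ∑ i ∈ s, F i p) := by
  intro lam hl p
  rw [Finset.mul_sum]
  exact Finset.sum_congr rfl fun i hi => h i hi lam hl p

lemma homog_mul {f g : Pt n k → ℝ} {r s : ℤ} (hf : Homog n k r f) (hg : Homog n k s g)
    {t : ℤ} (ht : t = r + s) : Homog n k t (fun p => f p * g p) := by
  intro lam hl p
  simp only [hf lam hl p, hg lam hl p, ht, zpow_add₀ hl.ne']
  ring

lemma homog_const_mul (c : ℝ) {f : Pt n k → ℝ} {r : ℤ} (hf : Homog n k r f) :
    Homog n k r (fun p => c * f p) := by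
  intro lam hl p
  simp only [hf lam hl p]
  ring

lemma homog_coord (a : Fin k) (j : Fin n) :
    Homog n k ((a : ℕ) + 1) (fun p : Pt n k => p.2 a j) := by
  intro lam hl p
  show (scale n k lam p).2 a j = _
  rw [show (((a : ℕ) : ℤ) + 1) = (((a : ℕ) + 1 : ℕ) : ℤ) by push_cast; ring, zpow_natCast]
  simp [scale]

lemma contDiff_coord (a : Fin k) (j : Fin n) :
    ContDiff ℝ (⊤ : ℕ∞) (fun p : Pt n k => p.2 a j) :=
  (((ContinuousLinearMap.proj j : (Fin n → ℝ) →L[ℝ] ℝ).comp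
    ((ContinuousLinearMap.proj a).comp
      (ContinuousLinearMap.snd ℝ (Fin n → ℝ) (Fin k → Fin n → ℝ))))).contDiff

lemma contDiff_pderivX {f : Pt n k → ℝ} (hf : ContDiff ℝ (⊤ : ℕ∞) f) (i : Fin n) :
    ContDiff ℝ (⊤ : ℕ∞) (pderivX n k f i) :=
  (hf.fderiv_right (by simp)).clm_apply contDiff_const

lemma contDiff_pderivY {f : Pt n k → ℝ} (hf : ContDiff ℝ (⊤ : ℕ∞) f) (a : Fin k) (h : Fin n) :
    ContDiff ℝ (⊤ : ℕ∞) (pderivY n k f a h) :=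
  (hf.fderiv_right (by simp)).clm_apply contDiff_const

lemma contDiff_Sop (hk : 0 < k) {G : Fin n → Pt n k → ℝ}
    (hGs : ∀ i, ContDiff ℝ (⊤ : ℕ∞) (G i)) {f : Pt n k → ℝ} (hf : ContDiff ℝ (⊤ : ℕ∞) f) :
    ContDiff ℝ (⊤ : ℕ∞) (Sop n k hk G f) := by
  unfold Sop
  refine ContDiff.add ?_ ?_
  · exact ContDiff.sum fun j _ => (contDiff_coord _ j).mul (contDiff_pderivX hf j)
  · refine ContDiff.sum fun a _ => ContDiff.sum fun j _ => ?_
    by_cases ha : (a : ℕ) + 1 < k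
    · simp only [dif_pos ha]
      exact (contDiff_const.mul (contDiff_coord _ j)).mul (contDiff_pderivY hf a j)
    · simp only [dif_neg ha]
      exact (contDiff_const.mul (hGs j)).mul (contDiff_pderivY hf a j)

lemma homog_Sop (hk : 0 < k) {G : Fin n → Pt n k → ℝ}
    (hGd : ∀ i, Differentiable ℝ (G i)) (hGh : ∀ i, Homog n k ((k : ℤ) + 1) (G i))
    {f : Pt n k → ℝ} (hf : Differentiable ℝ f) {r : ℤ} (hfh : Homog n k r f) :
    Homog n k (r + 1) (Sop n k hk G f) := by
  show Homog n k (r + 1) (fun p => (∑ j, p.2 ⟨0, hk⟩ j * pderivX n k f j p) +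
    ∑ a : Fin k, ∑ j,
      (if ha : (a : ℕ) + 1 < k
        then (((a : ℕ) + 2 : ℕ) : ℝ) * p.2 ⟨(a : ℕ) + 1, ha⟩ j
        else -(((k : ℕ) + 1 : ℕ) : ℝ) * G j p) * pderivY n k f a j p)
  refine homog_add (homog_sum _ _ fun j _ => ?_) (homog_sum _ _ fun a _ => homog_sum _ _ fun j _ => ?_)
  · exact homog_mul (homog_coord ⟨0, hk⟩ j) (homog_pderivX hf hfh j) (by simp; ring)
  · by_cases ha : (a : ℕ) + 1 < k
    · simp only [dif_pos ha]
      refine homog_mul (homog_const_mul _ (homog_coord ⟨(a : ℕ) + 1, ha⟩ j))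
        (homog_pderivY hf hfh a j rfl) ?_
      simp only [Fin.val_mk]
      push_cast
      ring
    · simp only [dif_neg ha]
      have hak : (a : ℕ) + 1 = k := by have := a.isLt; omega
      refine homog_mul (homog_const_mul _ (hGh j)) (homog_pderivY hf hfh a j rfl) ?_
      omega

end Aux

section Main

variable {n k : ℕ}

lemma miron_key (hk : 0 < k) (G : Fin n → Pt n k → ℝ) (hG : ∀ i, ContDiff ℝ (⊤ : ℕ∞) (G i))
    (hGh : ∀ i, Homog n k ((k : ℤ) + 1) (G i)) :
    ∀ a : ℕ, ∀ i j : Fin n,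
      ContDiff ℝ (⊤ : ℕ∞) (MironM n k hk G a i j) ∧
      Homog n k ((a : ℤ) + 1) (MironM n k hk G a i j) := by
  have h0 : ∀ i j : Fin n,
      ContDiff ℝ (⊤ : ℕ∞) (MironM n k hk G 0 i j) ∧
      Homog n k 1 (MironM n k hk G 0 i j) := by
    intro i j
    constructor
    · simp only [MironM]
      exact contDiff_pderivY (hG i) _ j
    · simp only [MironM]
      refine homog_pderivY ((hG i).differentiable (by simp)) (hGh i) _ j ?_
      simp only [Fin.val_mk]
      omega
  intro a
  induction a with
  | zero =>
    intro i j
    refine ⟨(h0 i j).1, ?_⟩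
    have : ((0 : ℕ) : ℤ) + 1 = 1 := by norm_num
    rw [this]
    exact (h0 i j).2
  | succ a ih =>
    intro i j
    have heq : MironM n k hk G (a + 1) i j = fun p => (((a : ℝ) + 2)⁻¹) *
        (Sop n k hk G (MironM n k hk G a i j) p +
          ∑ m, MironM n k hk G 0 i m p * MironM n k hk G a m j p) := by
      funext p
      simp only [MironM]
    constructor
    · rw [heq]
      refine contDiff_const.mul (ContDiff.add ?_ ?_)
      · exact contDiff_Sop hk hG (ih i j).1
      · exact ContDiff.sum fun m _ => ((h0 i m).1).mul ((ih m j).1)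
    · rw [heq]
      refine homog_const_mul _ ?_
      have h1 : Homog n k (((a : ℤ) + 1) + 1) (Sop n k hk G (MironM n k hk G a i j)) :=
        homog_Sop hk (fun i => (hG i).differentiable (by simp)) hGh
          ((ih i j).1.differentiable (by simp)) (ih i j).2
      have h2 : Homog n k (((a : ℤ) + 1) + 1)
          (fun p => ∑ m, MironM n k hk G 0 i m p * MironM n k hk G a m j p) :=
        homog_sum _ _ fun m _ => homog_mul (h0 i m).2 (ih m j).2 (by ring)
      have := homog_add h1 h2
      have he : (((a + 1 : ℕ) : ℤ) + 1) = (((a : ℤ) + 1) + 1) := by push_cast; ring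
      rw [he]
      exact this
end Main


theorem stmt_6 (n k : ℕ) (hn : 1 ≤ n) (hk : 0 < k)
    (G : Fin n → Pt n k → ℝ) (hG : ∀ i, ContDiff ℝ (⊤ : ℕ∞) (G i))
    (hom : ∀ i : Fin n, ∀ lam : ℝ, 0 < lam → ∀ p : Pt n k,
      G i (scale n k lam p) = lam ^ (k + 1) * G i p) :
    ∀ a : ℕ, a < k → ∀ (i j : Fin n) (lam : ℝ), 0 < lam → ∀ p : Pt n k,
      MironM n k hk G a i j (scale n k lam p)
        = lam ^ (a + 1) * MironM n k hk G a i j p := by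
  have hGh : ∀ i, Homog n k ((k : ℤ) + 1) (G i) := by
    intro i lam hl p
    rw [hom i lam hl p, show ((k : ℤ) + 1) = ((k + 1 : ℕ) : ℤ) by push_cast; ring,
      zpow_natCast]
  intro a _ i j lam hl p
  have h := (miron_key hk G hG hGh a i j).2 lam hl p
  rw [h, show ((a : ℤ) + 1) = ((a + 1 : ℕ) : ℤ) by push_cast; ring, zpow_natCast]
end
end

section
/- Let n, k ≥ 1, let Gⁱ : ℝⁿ × (ℝⁿ)ᵏ → ℝ be smooth, and set M*₍ᵅ₎ⁱⱼ = ∂Gⁱ/∂y⁽ᵏ⁺¹⁻ᵅ⁾ʲ for α = 1, …, k. Let x : I → ℝⁿ be a smooth curve on an open interval I and define its k-extension by y⁽ᵅ⁾ⁱ(t) = (1/α!) dᵅxⁱ/dtᵅ for α = 1, …, k (and y⁽⁰⁾ = x). If the k-extension is autoparallel for the nonlinear connection with dual coefficients M*₍ᵅ₎, i.e. for every α ∈ {1, …, k}, dy⁽ᵅ⁾ⁱ/dt + Σ_{β=1}^{α} Σⱼ M*₍ᵦ₎ⁱⱼ(x, y⁽¹⁾, …, y⁽ᵏ⁾) ·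 d y⁽ᵅ⁻ᵝ⁾ʲ/dt = 0 along the curve, then the curve is a k-path of the k-semispray ²S with coefficients ²Gⁱ = (1/(k+1)) Σ_{α=1}^{k} Σ_{h} α y⁽ᵅ⁾ʰ ∂Gⁱ/∂y⁽ᵅ⁾ʰ, i.e. dy⁽ᵏ⁾ⁱ/dt = −(k+1) ²Gⁱ(x, y⁽¹⁾, …, y⁽ᵏ⁾) along the curve. -/
/- STATEMENT 9: If the k-extension of a smooth curve x : I → ℝⁿ (I an open
interval) is autoparallel for the Bucǎtaru nonlinear connection with dual
coefficients M*₍ᵅ₎ⁱⱼ = ∂Gⁱ/∂y⁽ᵏ⁺¹⁻ᵅ⁾ʲ, i.e. for α = 1, …, k,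
dy⁽ᵅ⁾ⁱ/dt + Σ_{β=1}^{α} Σⱼ M*₍ᵦ₎ⁱⱼ dy⁽ᵅ⁻ᵝ⁾ʲ/dt = 0 along the curve (with
y⁽ᵅ⁾ = (1/α!) x⁽ᵅ⁾ and y⁽⁰⁾ = x), then the curve is a k-path of the k-semispray
²S with coefficients ²Gⁱ = (1/(k+1)) Γᵏ Gⁱ, i.e. dy⁽ᵏ⁾ⁱ/dt = −(k+1) ²Gⁱ along
the curve.  Here α, β are encoded by a, b : Fin k as α = a+1, β = b+1, and the
vertical slot k+1−β is 0-indexed as k−1−b. -/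

noncomputable section

/-- The Liouville operator Γᵏ f = Σ_{α=1}^k Σ_h α y⁽ᵅ⁾ʰ ∂f/∂y⁽ᵅ⁾ʰ. -/
def liouvOp (n k : ℕ) (f : Pt n k → ℝ) (p : Pt n k) : ℝ :=
  ∑ a : Fin k, ∑ h : Fin n,
    (((a : ℕ) + 1 : ℕ) : ℝ) * p.2 a h * pderivY n k f a h p

/-- The k-extension of a curve c : ℝ → ℝⁿ:
t ↦ (c t, (1/1!) c'(t), …, (1/k!) c⁽ᵏ⁾(t)). -/
def kExt (n k : ℕ) (c : ℝ → Fin n → ℝ) (t : ℝ) : Pt n k :=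
  (c t, fun a => ((((a : ℕ) + 1).factorial : ℝ))⁻¹ • iteratedDeriv ((a : ℕ) + 1) c t)

theorem stmt_9 (n k : ℕ) (hn : 1 ≤ n) (hk : 1 ≤ k)
    (G : Fin n → Pt n k → ℝ) (hG : ∀ i, ContDiff ℝ (⊤ : ℕ∞) (G i))
    (I : Set ℝ) (hI : IsOpen I) (hI' : I.OrdConnected)
    (c : ℝ → Fin n → ℝ) (hc : ContDiffOn ℝ (⊤ : ℕ∞) c I)
    -- autoparallel: for α = 1, …, k (α = a+1),
    -- dy⁽ᵅ⁾ⁱ/dt + Σ_{β=1}^{α} Σⱼ M*₍ᵦ₎ⁱⱼ · dy⁽ᵅ⁻ᵝ⁾ʲ/dt = 0, where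
    -- dy⁽ᵅ⁾ⁱ/dt = (1/α!) c⁽ᵅ⁺¹⁾ⁱ and M*₍ᵦ₎ⁱⱼ = ∂Gⁱ/∂y⁽ᵏ⁺¹⁻ᵝ⁾ʲ
    (auto : ∀ t ∈ I, ∀ (a : Fin k) (i : Fin n),
      ((((a : ℕ) + 1).factorial : ℝ))⁻¹ * iteratedDeriv ((a : ℕ) + 2) c t i +
      (∑ b : Fin k,
        if hb : (b : ℕ) ≤ (a : ℕ) then
          ∑ j : Fin n,
            pderivY n k (G i) ⟨k - 1 - (b : ℕ), by omega⟩ j (kExt n k c t) *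
              ((((a : ℕ) - (b : ℕ)).factorial : ℝ))⁻¹ *
                iteratedDeriv ((a : ℕ) - (b : ℕ) + 1) c t j
        else 0) = 0) :
    -- conclusion: c is a k-path of ²S, i.e. dy⁽ᵏ⁾ⁱ/dt = −(k+1) ²Gⁱ
    ∀ t ∈ I, ((k.factorial : ℝ))⁻¹ • iteratedDeriv (k + 1) c t =
      fun i => -(((k : ℕ) + 1 : ℕ) : ℝ) *
        (((k : ℝ) + 1)⁻¹ * liouvOp n k (G i) (kExt n k c t)) := by
  intro t ht
  have hkk : k - 1 < k := by omega
  funext i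
  have h := auto t ht ⟨k - 1, hkk⟩ i
  simp only [Fin.val_mk] at h
  have e1 : k - 1 + 1 = k := by omega
  have e2 : k - 1 + 2 = k + 1 := by omega
  rw [e1, e2] at h
  -- rewrite the dite sum: condition always true
  -- the double sum in h equals liouvOp
  have hL : liouvOp n k (G i) (kExt n k c t) =
      ∑ b : Fin k,
        if hb : (b : ℕ) ≤ k - 1 then
          ∑ j : Fin n,
            pderivY n k (G i) ⟨k - 1 - (b : ℕ), by omega⟩ j (kExt n k c t) *
              (((k - 1 - (b : ℕ)).factorial : ℝ))⁻¹ *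
                iteratedDeriv (k - 1 - (b : ℕ) + 1) c t j
        else 0 := by
    rw [liouvOp]
    rw [← Fintype.sum_bijective Fin.rev Fin.rev_bijective _ _ (fun _ => rfl)]
    refine Finset.sum_congr rfl fun b _ => ?_
    rw [dif_pos (by omega : (b : ℕ) ≤ k - 1)]
    refine Finset.sum_congr rfl fun j _ => ?_
    have hv : ((Fin.rev b : Fin k) : ℕ) = k - 1 - (b : ℕ) := by
      simp [Fin.val_rev]; omega
    have hb' : Fin.rev b = (⟨k - 1 - (b : ℕ), by omega⟩ : Fin k) := Fin.ext hv
    rw [hb', kExt]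
    simp only [Fin.val_mk, Pi.smul_apply, smul_eq_mul]
    set m := k - 1 - (b : ℕ)
    have hfac : ((m + 1).factorial : ℝ) = (m + 1) * m.factorial := by
      rw [Nat.factorial_succ]; push_cast; ring
    have hm1 : ((m : ℝ) + 1) ≠ 0 := by positivity
    have hmf : ((m.factorial : ℝ)) ≠ 0 := Nat.cast_ne_zero.mpr m.factorial_ne_zero
    rw [hfac]
    push_cast
    field_simp
    ring
  rw [← hL] at h
  simp only [Pi.smul_apply, smul_eq_mul]
  have hk1 : ((k : ℝ) + 1) ≠ 0 := by positivity
  push_cast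
  rw [neg_mul, mul_inv_cancel_left₀ hk1]
  linarith
end
end
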